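/- Let M₀ be a real symmetric n×n matrix with spectral decomposition M₀ = UΛUᵀ where U is orthogonal and Λ is diagonal with entries λ₁, …, λₙ. Then for every positive semi-definite real symmetric n×n matrix M, ‖M − M₀‖²_F = ‖UᵀMU − Λ‖²_F ≥ Σᵢ ((UᵀMU)ᵢᵢ − λᵢ)² ≥ Σ_{i : λᵢ < 0} λᵢ², where the last inequality uses that the diagonal entries of the positive semi-definite matrix UᵀMU are nonnegative. -/

import Mathlib

open Matrix Finset

/-- The positive part of a real symmetric matrix: keep only the nonnegative
eigenvalues in the spectral decomposition. -/
noncomputable def posPart {n : ℕ} (M : Matrix (Fin n) (Fin n) ℝ) (hM : M.IsHermitian) :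
    Matrix (Fin n) (Fin n) ℝ :=
  ∑ i, max 0 (hM.eigenvalues i) •
    Matrix.vecMulVec (fun j => hM.eigenvectorBasis i j) (fun j => hM.eigenvectorBasis i j)

/-- The squared Frobenius norm of a real matrix. -/
def frobSq {m n : ℕ} (M : Matrix (Fin m) (Fin n) ℝ) : ℝ :=
  ∑ i, ∑ j, (M i j) ^ 2

/-- The Frobenius norm of a real matrix. -/
noncomputable def frobNorm {m n : ℕ} (M : Matrix (Fin m) (Fin n) ℝ) : ℝ :=
  Real.sqrt (∑ i, ∑ j, (M i j) ^ 2)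

lemma frobSq_eq_trace_transpose_mul {m n : ℕ} (A : Matrix (Fin m) (Fin n) ℝ) :
    frobSq A = (Aᵀ * A).trace := by
  simp only [frobSq, trace, Matrix.diag, mul_apply, transpose_apply, sq]
  exact Finset.sum_comm

lemma frobSq_transpose_mul_mul {n k : ℕ} {U : Matrix (Fin n) (Fin k) ℝ} (hU : U * Uᵀ = 1)
    (A : Matrix (Fin n) (Fin n) ℝ) : frobSq (Uᵀ * A * U) = frobSq A := by
  rw [frobSq_eq_trace_transpose_mul, frobSq_eq_trace_transpose_mul]
  calc ((Uᵀ * A * U)ᵀ * (Uᵀ * A * U)).trace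
      = (Uᵀ * (Aᵀ * A) * U).trace := by
        simp only [transpose_mul, transpose_transpose, Matrix.mul_assoc]
        rw [← Matrix.mul_assoc U Uᵀ, hU, Matrix.one_mul]
    _ = (U * Uᵀ * (Aᵀ * A)).trace := by rw [trace_mul_comm, Matrix.mul_assoc]
    _ = (Aᵀ * A).trace := by rw [hU, Matrix.one_mul]

lemma sum_sq_diag_le_frobSq {n : ℕ} (A : Matrix (Fin n) (Fin n) ℝ) :
    ∑ i, A i i ^ 2 ≤ frobSq A :=
  Finset.sum_le_sum fun i _ =>
    Finset.single_le_sum (f := fun j => A i j ^ 2) (fun _ _ => sq_nonneg _) (Finset.mem_univ i)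

lemma sum_filter_neg_sq_le_sum_sq_sub {ι : Type*} [Fintype ι] {b lam : ι → ℝ}
    (hb : ∀ i, 0 ≤ b i) :
    ∑ i ∈ Finset.univ.filter (fun i => lam i < 0), lam i ^ 2 ≤ ∑ i, (b i - lam i) ^ 2 := by
  calc ∑ i ∈ Finset.univ.filter (fun i => lam i < 0), lam i ^ 2
      ≤ ∑ i ∈ Finset.univ.filter (fun i => lam i < 0), (b i - lam i) ^ 2 := by
        refine Finset.sum_le_sum fun i hi => ?_
        have hlam : lam i < 0 := (Finset.mem_filter.mp hi).2
        nlinarith [hb i]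
    _ ≤ ∑ i, (b i - lam i) ^ 2 :=
        Finset.sum_le_sum_of_subset_of_nonneg (Finset.filter_subset _ _)
          fun _ _ _ => sq_nonneg _

/-- key estimate for the nearest-PSD-matrix lemma: for M₀ = UΛUᵀ with U
orthogonal and any PSD matrix M, ‖M − M₀‖²_F = ‖UᵀMU − Λ‖²_F ≥ Σᵢ((UᵀMU)ᵢᵢ − λᵢ)²
≥ Σ_{λᵢ<0} λᵢ². -/
theorem frobSq_psd_approx_key_estimate {n : ℕ} (M₀ U : Matrix (Fin n) (Fin n) ℝ)
    (lam : Fin n → ℝ) (hU : U * Uᵀ = 1) (hM₀ : M₀ = U * Matrix.diagonal lam * Uᵀ) :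
    ∀ M : Matrix (Fin n) (Fin n) ℝ, M.PosSemidef →
      frobSq (M - M₀) = frobSq (Uᵀ * M * U - Matrix.diagonal lam) ∧
      (∑ i, ((Uᵀ * M * U) i i - lam i) ^ 2) ≤ frobSq (Uᵀ * M * U - Matrix.diagonal lam) ∧
      (∑ i ∈ Finset.univ.filter (fun i => lam i < 0), (lam i) ^ 2) ≤
        ∑ i, ((Uᵀ * M * U) i i - lam i) ^ 2 := by
  intro M hM
  have hUtU : Uᵀ * U = 1 := mul_eq_one_comm.mp hU
  have hΛ : Uᵀ * (U * diagonal lam * Uᵀ) * U = diagonal lam := by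
    rw [← Matrix.mul_assoc, ← Matrix.mul_assoc, hUtU, Matrix.one_mul, Matrix.mul_assoc, hUtU,
      Matrix.mul_one]
  have hconj : Uᵀ * (M - M₀) * U = Uᵀ * M * U - diagonal lam := by
    rw [hM₀, Matrix.mul_sub, Matrix.sub_mul, hΛ]
  have hdiag : ∀ i, 0 ≤ (Uᵀ * M * U) i i := fun _ => by
    simpa using (hM.conjTranspose_mul_mul_same U).diag_nonneg
  refine ⟨by rw [← hconj, frobSq_transpose_mul_mul hU], ?_, sum_filter_neg_sq_le_sum_sq_sub hdiag⟩
  simpa using sum_sq_diag_le_frobSq (Uᵀ * M * U - diagonal lam)
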